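/- Let H be a group and N a normal subgroup of H such that: (1) N is solvable; (2) for every nontrivial element h̄ of H/N, the centralizer C_{H/N}(h̄) is solvable; and (3) for every element a ∈ N, the centralizer C_H(a) is not solvable. Then N is a characteristic subgroup of H, i.e., α(N) = N for every automorphism α of H. -/

import Mathlib

/-! The hypotheses pin `N` down intrinsically: `a ∈ N` exactly when `C_H(a)` is not solvable.
For `a ∉ N`, the group `C_H(a)` is an extension of its intersection with the solvable group `N` by
its image in `H/N`, which lies in the solvable centralizer of the nontrivial element `aN`.
Automorphisms carry `C_H(a)` isomorphically onto `C_H(α a)`, so they preserve this description. -/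

open Subgroup

namespace Subgroup

variable {G G' : Type*} [Group G] [Group G']

theorem isSolvable_of_isSolvable_map (f : G →* G') (K : Subgroup G) [Group.IsSolvable f.ker]
    [Group.IsSolvable (K.map f)] : Group.IsSolvable K := by
  have : Group.IsSolvable (f.ker.subgroupOf K) :=
    Group.isSolvable_of_isSolvable_injective (f := K.subtype.subgroupComap f.ker)
      fun x y hxy ↦ Subtype.ext (Subtype.ext (congrArg (fun z : f.ker ↦ (z : G)) hxy))
  exact Group.isSolvable_of_ker_le_range (f.ker.subgroupOf K).subtype (f.subgroupMap K)
    (by rw [ker_subgroupMap, range_subtype])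

theorem map_equiv_centralizer (e : G ≃* G') (s : Set G) :
    (centralizer s).map (e : G →* G') = centralizer (e '' s) := by
  ext y
  rw [map_equiv_eq_comap_symm, mem_comap]
  simp only [mem_centralizer_iff, Set.forall_mem_image]
  refine forall₂_congr fun x _ ↦ ?_
  rw [← e.symm.injective.eq_iff]
  simp

theorem isSolvable_centralizer_apply_iff (e : G ≃* G') (a : G) :
    Group.IsSolvable (centralizer {e a}) ↔ Group.IsSolvable (centralizer {a}) := by
  rw [← Set.image_singleton, ← map_equiv_centralizer]
  exact ⟨fun _ ↦ Group.isSolvable_of_isSolvable_injective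
      (f := (e.subgroupMap (centralizer {a})).toMonoidHom) (MulEquiv.injective _),
    fun _ ↦ Group.isSolvable_of_isSolvable_injective
      (f := (e.subgroupMap (centralizer {a})).symm.toMonoidHom) (MulEquiv.injective _)⟩

theorem isSolvable_centralizer_of_isSolvable_centralizer_mk (N : Subgroup G) [N.Normal]
    [Group.IsSolvable N] (a : G) [Group.IsSolvable (centralizer {(a : G ⧸ N)})] :
    Group.IsSolvable (centralizer {a}) := by
  have : Group.IsSolvable (QuotientGroup.mk' N).ker := by rwa [QuotientGroup.ker_mk']
  have hle : (centralizer {a}).map (QuotientGroup.mk' N) ≤ centralizer {(a : G ⧸ N)} := by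
    simpa using map_centralizer_le_centralizer_image {a} (QuotientGroup.mk' N)
  have : Group.IsSolvable ((centralizer {a}).map (QuotientGroup.mk' N)) :=
    Group.isSolvable_of_isSolvable_injective (inclusion_injective hle)
  exact isSolvable_of_isSolvable_map (QuotientGroup.mk' N) _

end Subgroup

theorem stmt6 {H : Type*} [Group H] (N : Subgroup H) [N.Normal]
    (h1 : IsSolvable N)
    (h2 : ∀ hb : H ⧸ N, hb ≠ 1 → IsSolvable (Subgroup.centralizer {hb}))
    (h3 : ∀ a ∈ N, ¬ IsSolvable (Subgroup.centralizer ({a} : Set H))) :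
    ∀ α : H ≃* H, N.map α.toMonoidHom = N := by
  have mem_iff : ∀ a, a ∈ N ↔ ¬ Group.IsSolvable (centralizer ({a} : Set H)) := by
    refine fun a ↦ ⟨h3 a, fun hC ↦ by_contra fun ha ↦ hC ?_⟩
    have : Group.IsSolvable N := h1
    have : Group.IsSolvable (centralizer {(a : H ⧸ N)}) :=
      h2 a (by rwa [ne_eq, QuotientGroup.eq_one_iff])
    exact isSolvable_centralizer_of_isSolvable_centralizer_mk N a
  intro α
  ext x
  rw [mem_map_equiv, mem_iff, mem_iff, isSolvable_centralizer_apply_iff]
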